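/- Let 𝒴 ⊂ ℝ be a finite set, let 𝒜, 𝒢₁, ℬ₁, 𝒢₂ be finite types, let p be a strictly positive probability mass function on 𝒴 × 𝒜 × 𝒢₁ × ℬ₁ × 𝒢₂, and fix a ∈ 𝒜. If G₁ ⊥ (A, G₂) | B₁ under p, then for every g₂: ∑_{(y,a′,g₁,b₁)} p(y,a′,g₁,b₁ | g₂) · ( ψ_a^{B₁,G₂}(y,a′,b₁,g₂) − ψ_a^{(G₁,B₁),G₂}(y,a′,g₁,b₁,g₂) ) = 0; that is, the difference of the two influence functions has vanishing conditional expectation given G₂. -/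

import Mathlib

open Finset

noncomputable section

variable {Y : Finset ℝ} {A G₁ B₁ G₂ : Type}
variable [Fintype A] [Fintype G₁] [Fintype B₁] [Fintype G₂] [DecidableEq A]

/-- Marginal `p(g₁)`. -/
def pG1 (p : Y × A × G₁ × B₁ × G₂ → ℝ) (g₁ : G₁) : ℝ :=
  ∑ y : Y, ∑ a : A, ∑ b₁ : B₁, ∑ g₂ : G₂, p (y, a, g₁, b₁, g₂)

/-- Marginal `p(b₁)`. -/
def pB1 (p : Y × A × G₁ × B₁ × G₂ → ℝ) (b₁ : B₁) : ℝ :=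
  ∑ y : Y, ∑ a : A, ∑ g₁ : G₁, ∑ g₂ : G₂, p (y, a, g₁, b₁, g₂)

/-- Marginal `p(g₂)`. -/
def pG2 (p : Y × A × G₁ × B₁ × G₂ → ℝ) (g₂ : G₂) : ℝ :=
  ∑ y : Y, ∑ a : A, ∑ g₁ : G₁, ∑ b₁ : B₁, p (y, a, g₁, b₁, g₂)

/-- Marginal `p(g₁, b₁)`. -/
def pG1B1 (p : Y × A × G₁ × B₁ × G₂ → ℝ) (g₁ : G₁) (b₁ : B₁) : ℝ :=
  ∑ y : Y, ∑ a : A, ∑ g₂ : G₂, p (y, a, g₁, b₁, g₂)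

/-- Marginal `p(a, b₁, g₂)`. -/
def pAB1G2 (p : Y × A × G₁ × B₁ × G₂ → ℝ) (a : A) (b₁ : B₁) (g₂ : G₂) : ℝ :=
  ∑ y : Y, ∑ g₁ : G₁, p (y, a, g₁, b₁, g₂)

/-- Marginal `p(a, g₁, b₁, g₂)`. -/
def pAG1B1G2 (p : Y × A × G₁ × B₁ × G₂ → ℝ) (a : A) (g₁ : G₁) (b₁ : B₁) (g₂ : G₂) : ℝ :=
  ∑ y : Y, p (y, a, g₁, b₁, g₂)

/-- Marginal `p(a, g₁, g₂)`. -/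
def pAG1G2 (p : Y × A × G₁ × B₁ × G₂ → ℝ) (a : A) (g₁ : G₁) (g₂ : G₂) : ℝ :=
  ∑ y : Y, ∑ b₁ : B₁, p (y, a, g₁, b₁, g₂)

/-- Outcome regression `m_B(b₁,g₂) = ∑_y y·p(y | a, b₁, g₂)` for the
adjustment set `(B₁, G₂)`. -/
def mB (p : Y × A × G₁ × B₁ × G₂ → ℝ) (a : A) (b₁ : B₁) (g₂ : G₂) : ℝ :=
  ∑ y : Y, (y : ℝ) * ((∑ g₁ : G₁, p (y, a, g₁, b₁, g₂)) / pAB1G2 p a b₁ g₂)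

/-- Outcome regression `m_{GB}(g₁,b₁,g₂) = ∑_y y·p(y | a, g₁, b₁, g₂)` for
the adjustment set `((G₁, B₁), G₂)`. -/
def mGB (p : Y × A × G₁ × B₁ × G₂ → ℝ) (a : A) (g₁ : G₁) (b₁ : B₁) (g₂ : G₂) : ℝ :=
  ∑ y : Y, (y : ℝ) * (p (y, a, g₁, b₁, g₂) / pAG1B1G2 p a g₁ b₁ g₂)

/-- Outcome regression `m_{GG}(g₁,g₂) = ∑_y y·p(y | a, g₁, g₂)` for the
adjustment set `(G₁, G₂)`. -/
def mGG (p : Y × A × G₁ × B₁ × G₂ → ℝ) (a : A) (g₁ : G₁) (g₂ : G₂) : ℝ :=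
  ∑ y : Y, (y : ℝ) * ((∑ b₁ : B₁, p (y, a, g₁, b₁, g₂)) / pAG1G2 p a g₁ g₂)

/-- Target parameter for the adjustment set `(B₁, G₂)`. -/
def TB (p : Y × A × G₁ × B₁ × G₂ → ℝ) (a : A) : ℝ :=
  ∑ b₁ : B₁, pB1 p b₁ * ∑ g₂ : G₂, pG2 p g₂ * mB p a b₁ g₂

/-- Target parameter for the adjustment set `((G₁, B₁), G₂)`. -/
def TGB (p : Y × A × G₁ × B₁ × G₂ → ℝ) (a : A) : ℝ :=
  ∑ g₁ : G₁, ∑ b₁ : B₁, pG1B1 p g₁ b₁ * ∑ g₂ : G₂, pG2 p g₂ * mGB p a g₁ b₁ g₂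

/-- Target parameter for the adjustment set `(G₁, G₂)`. -/
def TGG (p : Y × A × G₁ × B₁ × G₂ → ℝ) (a : A) : ℝ :=
  ∑ g₁ : G₁, pG1 p g₁ * ∑ g₂ : G₂, pG2 p g₂ * mGG p a g₁ g₂

/-- Influence function `ψ_a^{B₁,G₂}` for the adjustment set `(B₁, G₂)`. -/
def psiB (p : Y × A × G₁ × B₁ × G₂ → ℝ) (a : A)
    (y : Y) (a' : A) (b₁ : B₁) (g₂ : G₂) : ℝ :=
  (if a' = a then (1 : ℝ) else 0) * (pB1 p b₁ * pG2 p g₂ / pAB1G2 p a b₁ g₂) *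
      ((y : ℝ) - mB p a b₁ g₂)
    + (∑ g₂' : G₂, pG2 p g₂' * mB p a b₁ g₂')
    + (∑ b₁' : B₁, pB1 p b₁' * mB p a b₁' g₂)
    - 2 * TB p a

/-- Influence function `ψ_a^{(G₁,B₁),G₂}` for the adjustment set `((G₁, B₁), G₂)`. -/
def psiGB (p : Y × A × G₁ × B₁ × G₂ → ℝ) (a : A)
    (y : Y) (a' : A) (g₁ : G₁) (b₁ : B₁) (g₂ : G₂) : ℝ :=
  (if a' = a then (1 : ℝ) else 0) *
      (pG1B1 p g₁ b₁ * pG2 p g₂ / pAG1B1G2 p a g₁ b₁ g₂) *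
      ((y : ℝ) - mGB p a g₁ b₁ g₂)
    + (∑ g₂' : G₂, pG2 p g₂' * mGB p a g₁ b₁ g₂')
    + (∑ g₁' : G₁, ∑ b₁' : B₁, pG1B1 p g₁' b₁' * mGB p a g₁' b₁' g₂)
    - 2 * TGB p a

/-- Influence function `ψ_a^{G₁,G₂}` for the adjustment set `(G₁, G₂)`. -/
def psiGG (p : Y × A × G₁ × B₁ × G₂ → ℝ) (a : A)
    (y : Y) (a' : A) (g₁ : G₁) (g₂ : G₂) : ℝ :=
  (if a' = a then (1 : ℝ) else 0) * (pG1 p g₁ * pG2 p g₂ / pAG1G2 p a g₁ g₂) *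
      ((y : ℝ) - mGG p a g₁ g₂)
    + (∑ g₂' : G₂, pG2 p g₂' * mGG p a g₁ g₂')
    + (∑ g₁' : G₁, pG1 p g₁' * mGG p a g₁' g₂)
    - 2 * TGG p a

/-- Conditional independence `G₁ ⊥ (A, G₂) | B₁` under `p`. -/
def CI_G1_AG2_B1 (p : Y × A × G₁ × B₁ × G₂ → ℝ) : Prop :=
  ∀ (g₁ : G₁) (a : A) (g₂ : G₂) (b₁ : B₁),
    (∑ y : Y, p (y, a, g₁, b₁, g₂)) / pB1 p b₁ =
      (pG1B1 p g₁ b₁ / pB1 p b₁) * (pAB1G2 p a b₁ g₂ / pB1 p b₁)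

/-- Conditional independence `Y ⊥ B₁ | (A, G₁, G₂)` under `p`. -/
def CI_Y_B1_AG1G2 (p : Y × A × G₁ × B₁ × G₂ → ℝ) : Prop :=
  ∀ (y : Y) (a : A) (g₁ : G₁) (b₁ : B₁) (g₂ : G₂),
    p (y, a, g₁, b₁, g₂) / pAG1G2 p a g₁ g₂ =
      ((∑ b₁' : B₁, p (y, a, g₁, b₁', g₂)) / pAG1G2 p a g₁ g₂) *
        (pAG1B1G2 p a g₁ b₁ g₂ / pAG1G2 p a g₁ g₂)

/-- Variance of a real function of the observation under `p`. -/
def VarP (p : Y × A × G₁ × B₁ × G₂ → ℝ) (f : Y × A × G₁ × B₁ × G₂ → ℝ) : ℝ :=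
  (∑ o : Y × A × G₁ × B₁ × G₂, p o * f o ^ 2) -
    (∑ o : Y × A × G₁ × B₁ × G₂, p o * f o) ^ 2

/-! Under `G₁ ⊥ (A, G₂) | B₁` one has `p(a, g₁, b₁, g₂) p(b₁) = p(g₁, b₁) p(a, b₁, g₂)`, hence
`p(b₁) m_{B₁,G₂}(b₁, g₂) = ∑_{g₁} p(g₁, b₁) m_{(G₁,B₁),G₂}(g₁, b₁, g₂)`. Summing this identity shows
that the two targets agree and that the terms of `ψ_a^{B₁,G₂} - ψ_a^{(G₁,B₁),G₂}` depending on `g₂`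
alone cancel. What remains is the difference of two weighted residuals `y - m`, each orthogonal to
every function of its own adjustment set, plus the function
`D(g₁, b₁) = ∑_{g₂'} p(g₂') (m_{B₁,G₂}(b₁, g₂') - m_{(G₁,B₁),G₂}(g₁, b₁, g₂'))`, whose conditional
mean given `B₁` vanishes by the same identity. Conditional independence makes the law of `G₁` given
`(B₁, G₂)` that given `B₁`, so the conditional mean of `D` given `G₂` vanishes as well. -/

theorem sum_mul_sub_weightedMean {ι : Type*} [Fintype ι] (x q : ι → ℝ) (hq : ∑ i, q i ≠ 0) :
    ∑ i, q i * (x i - ∑ j, x j * (q j / ∑ k, q k)) = 0 := by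
  have hmean : ∑ j, x j * (q j / ∑ k, q k) = (∑ j, q j * x j) / ∑ k, q k := by
    rw [Finset.sum_div]
    exact Finset.sum_congr rfl fun j _ => by ring
  rw [hmean]
  simp only [mul_sub, Finset.sum_sub_distrib, ← Finset.sum_mul, mul_div_cancel₀ _ hq, sub_self]

section

-- Fresh type variables, so that the instance variables above are not included automatically.
variable {Y : Finset ℝ} {A G₁ B₁ G₂ : Type}

def condExpG2 [Fintype A] [Fintype G₁] [Fintype B₁] [Fintype G₂]
    (p : Y × A × G₁ × B₁ × G₂ → ℝ) (g₂ : G₂) (f : Y → A → G₁ → B₁ → ℝ) : ℝ :=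
  ∑ y : Y, ∑ a' : A, ∑ g₁ : G₁, ∑ b₁ : B₁, p (y, a', g₁, b₁, g₂) / pG2 p g₂ * f y a' g₁ b₁

variable {p : Y × A × G₁ × B₁ × G₂ → ℝ}

theorem sum_pG1B1 [Fintype A] [Fintype G₁] [Fintype G₂] (b₁ : B₁) :
    ∑ g₁, pG1B1 p g₁ b₁ = pB1 p b₁ := by
  unfold pG1B1 pB1
  rw [Finset.sum_comm]
  exact Finset.sum_congr rfl fun _ _ => Finset.sum_comm

theorem pAG1B1G2_pos [Nonempty Y] (hpos : ∀ o, 0 < p o) (a : A) (g₁ : G₁) (b₁ : B₁) (g₂ : G₂) :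
    0 < pAG1B1G2 p a g₁ b₁ g₂ :=
  sum_pos (fun _ _ => hpos _) univ_nonempty

theorem pAB1G2_pos [Fintype G₁] [Nonempty Y] [Nonempty G₁] (hpos : ∀ o, 0 < p o) (a : A)
    (b₁ : B₁) (g₂ : G₂) : 0 < pAB1G2 p a b₁ g₂ :=
  sum_pos (fun _ _ => sum_pos (fun _ _ => hpos _) univ_nonempty) univ_nonempty

theorem pB1_pos [Fintype A] [Fintype G₁] [Fintype G₂] [Nonempty Y] [Nonempty A] [Nonempty G₁]
    [Nonempty G₂] (hpos : ∀ o, 0 < p o) (b₁ : B₁) : 0 < pB1 p b₁ :=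
  sum_pos (fun _ _ => sum_pos (fun _ _ => sum_pos (fun _ _ => sum_pos (fun _ _ => hpos _)
    univ_nonempty) univ_nonempty) univ_nonempty) univ_nonempty

theorem pAG1B1G2_mul_pB1 [Fintype A] [Fintype G₁] [Fintype G₂] [Nonempty Y] [Nonempty G₁]
    (hpos : ∀ o, 0 < p o) (hCI : CI_G1_AG2_B1 p) (a : A) (g₁ : G₁) (b₁ : B₁) (g₂ : G₂) :
    pAG1B1G2 p a g₁ b₁ g₂ * pB1 p b₁ = pG1B1 p g₁ b₁ * pAB1G2 p a b₁ g₂ := by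
  have : Nonempty A := ⟨a⟩
  have : Nonempty G₂ := ⟨g₂⟩
  have h := hCI g₁ a g₂ b₁
  field_simp [(pB1_pos hpos b₁).ne'] at h
  exact h

theorem mB_eq_div [Fintype G₁] (a : A) (b₁ : B₁) (g₂ : G₂) :
    mB p a b₁ g₂ = (∑ y : Y, (y : ℝ) * ∑ g₁, p (y, a, g₁, b₁, g₂)) / pAB1G2 p a b₁ g₂ := by
  simp only [mB, mul_div_assoc, Finset.sum_div]

theorem mGB_eq_div (a : A) (g₁ : G₁) (b₁ : B₁) (g₂ : G₂) :
    mGB p a g₁ b₁ g₂ = (∑ y : Y, (y : ℝ) * p (y, a, g₁, b₁, g₂)) / pAG1B1G2 p a g₁ b₁ g₂ := by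
  simp only [mGB, mul_div_assoc, Finset.sum_div]

theorem pB1_mul_mB [Fintype A] [Fintype G₁] [Fintype G₂] [Nonempty Y] [Nonempty G₁]
    (hpos : ∀ o, 0 < p o) (hCI : CI_G1_AG2_B1 p) (a : A) (b₁ : B₁) (g₂ : G₂) :
    pB1 p b₁ * mB p a b₁ g₂ = ∑ g₁, pG1B1 p g₁ b₁ * mGB p a g₁ b₁ g₂ := by
  have hratio : ∀ g₁, pG1B1 p g₁ b₁ / pAG1B1G2 p a g₁ b₁ g₂ = pB1 p b₁ / pAB1G2 p a b₁ g₂ := by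
    intro g₁
    rw [div_eq_div_iff (pAG1B1G2_pos hpos a g₁ b₁ g₂).ne' (pAB1G2_pos hpos a b₁ g₂).ne',
      mul_comm (pB1 p b₁), pAG1B1G2_mul_pB1 hpos hCI]
  calc pB1 p b₁ * mB p a b₁ g₂
      = pB1 p b₁ / pAB1G2 p a b₁ g₂ * ∑ g₁, ∑ y : Y, (y : ℝ) * p (y, a, g₁, b₁, g₂) := by
        rw [mB_eq_div, mul_div_assoc', div_mul_eq_mul_div, Finset.sum_comm]
        simp only [Finset.mul_sum]
    _ = ∑ g₁, pG1B1 p g₁ b₁ * mGB p a g₁ b₁ g₂ := by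
        rw [Finset.mul_sum]
        refine Finset.sum_congr rfl fun g₁ _ => ?_
        rw [← hratio, mGB_eq_div]
        ring

theorem sum_sum_mul_pB1 [Fintype A] [Fintype G₁] [Fintype G₂] [Nonempty Y] [Nonempty G₁]
    (hpos : ∀ o, 0 < p o) (hCI : CI_G1_AG2_B1 p) (g₁ : G₁) (b₁ : B₁) (g₂ : G₂) :
    (∑ y : Y, ∑ a', p (y, a', g₁, b₁, g₂)) * pB1 p b₁ =
      pG1B1 p g₁ b₁ * ∑ a', pAB1G2 p a' b₁ g₂ := by
  rw [Finset.sum_comm, Finset.sum_mul, Finset.mul_sum]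
  exact Finset.sum_congr rfl fun a' _ => pAG1B1G2_mul_pB1 hpos hCI a' g₁ b₁ g₂

variable [Fintype A] [Fintype G₁] [Fintype B₁] [Fintype G₂]

theorem sum_pB1_mul_mB [Nonempty Y] [Nonempty G₁] (hpos : ∀ o, 0 < p o) (hCI : CI_G1_AG2_B1 p)
    (a : A) (g₂ : G₂) :
    ∑ b₁, pB1 p b₁ * mB p a b₁ g₂ = ∑ g₁, ∑ b₁, pG1B1 p g₁ b₁ * mGB p a g₁ b₁ g₂ := by
  simp only [pB1_mul_mB hpos hCI]
  exact Finset.sum_comm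

theorem TB_eq_TGB [Nonempty Y] [Nonempty G₁] (hpos : ∀ o, 0 < p o) (hCI : CI_G1_AG2_B1 p)
    (a : A) : TB p a = TGB p a := by
  unfold TB TGB
  rw [Finset.sum_comm (γ := G₁)]
  refine Finset.sum_congr rfl fun b₁ _ => ?_
  simp only [Finset.mul_sum, mul_left_comm (pB1 p b₁), pB1_mul_mB hpos hCI,
    mul_left_comm (pG1B1 p _ b₁)]
  exact Finset.sum_comm

theorem psiB_sub_psiGB [DecidableEq A] [Nonempty Y] [Nonempty G₁] (hpos : ∀ o, 0 < p o)
    (hCI : CI_G1_AG2_B1 p) (a : A) (y : Y) (a' : A) (g₁ : G₁) (b₁ : B₁) (g₂ : G₂) :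
    psiB p a y a' b₁ g₂ - psiGB p a y a' g₁ b₁ g₂ =
      (if a' = a then 1 else 0) *
          (pB1 p b₁ * pG2 p g₂ / pAB1G2 p a b₁ g₂ * ((y : ℝ) - mB p a b₁ g₂))
        - (if a' = a then 1 else 0) *
          (pG1B1 p g₁ b₁ * pG2 p g₂ / pAG1B1G2 p a g₁ b₁ g₂ * ((y : ℝ) - mGB p a g₁ b₁ g₂))
        + ∑ g₂', pG2 p g₂' * (mB p a b₁ g₂' - mGB p a g₁ b₁ g₂') := by
  simp only [psiB, psiGB, TB_eq_TGB hpos hCI, sum_pB1_mul_mB hpos hCI, mul_sub,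
    Finset.sum_sub_distrib]
  ring

theorem condExpG2_add (g₂ : G₂) (f g : Y → A → G₁ → B₁ → ℝ) :
    condExpG2 p g₂ (fun y a' g₁ b₁ => f y a' g₁ b₁ + g y a' g₁ b₁) =
      condExpG2 p g₂ f + condExpG2 p g₂ g := by
  simp only [condExpG2, mul_add, Finset.sum_add_distrib]

theorem condExpG2_sub (g₂ : G₂) (f g : Y → A → G₁ → B₁ → ℝ) :
    condExpG2 p g₂ (fun y a' g₁ b₁ => f y a' g₁ b₁ - g y a' g₁ b₁) =
      condExpG2 p g₂ f - condExpG2 p g₂ g := by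
  simp only [condExpG2, mul_sub, Finset.sum_sub_distrib]

theorem condExpG2_ite_mul [DecidableEq A] (g₂ : G₂) (a : A) (f : Y → G₁ → B₁ → ℝ) :
    condExpG2 p g₂ (fun y a' g₁ b₁ => (if a' = a then 1 else 0) * f y g₁ b₁) =
      ∑ y : Y, ∑ g₁, ∑ b₁, p (y, a, g₁, b₁, g₂) / pG2 p g₂ * f y g₁ b₁ := by
  simp only [condExpG2, ite_mul, one_mul, zero_mul, mul_ite, mul_zero, Finset.sum_ite_irrel,
    Finset.sum_const_zero, Finset.sum_ite_eq', Finset.mem_univ, if_true]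

theorem condExpG2_ite_mul_residual_mB [DecidableEq A] [Nonempty Y] [Nonempty G₁]
    (hpos : ∀ o, 0 < p o) (g₂ : G₂) (a : A) (w : B₁ → ℝ) :
    condExpG2 p g₂ (fun y a' _ b₁ => (if a' = a then 1 else 0) *
      (w b₁ * ((y : ℝ) - mB p a b₁ g₂))) = 0 := by
  rw [condExpG2_ite_mul, Finset.sum_comm_cycle]
  refine Finset.sum_eq_zero fun b₁ _ => ?_
  calc _ = w b₁ / pG2 p g₂ *
        ∑ y : Y, (∑ g₁, p (y, a, g₁, b₁, g₂)) * ((y : ℝ) - mB p a b₁ g₂) := by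
        simp only [Finset.mul_sum, Finset.sum_mul]
        exact Finset.sum_congr rfl fun _ _ => Finset.sum_congr rfl fun _ _ => by ring
    _ = 0 := mul_eq_zero_of_right _
        (sum_mul_sub_weightedMean _ _ (pAB1G2_pos hpos a b₁ g₂).ne')

theorem condExpG2_ite_mul_residual_mGB [DecidableEq A] [Nonempty Y]
    (hpos : ∀ o, 0 < p o) (g₂ : G₂) (a : A) (w : G₁ → B₁ → ℝ) :
    condExpG2 p g₂ (fun y a' g₁ b₁ => (if a' = a then 1 else 0) *
      (w g₁ b₁ * ((y : ℝ) - mGB p a g₁ b₁ g₂))) = 0 := by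
  rw [condExpG2_ite_mul, Finset.sum_comm]
  refine Finset.sum_eq_zero fun g₁ _ => ?_
  rw [Finset.sum_comm]
  refine Finset.sum_eq_zero fun b₁ _ => ?_
  calc _ = w g₁ b₁ / pG2 p g₂ *
        ∑ y : Y, p (y, a, g₁, b₁, g₂) * ((y : ℝ) - mGB p a g₁ b₁ g₂) := by
        rw [Finset.mul_sum]
        exact Finset.sum_congr rfl fun _ _ => by ring
    _ = 0 := mul_eq_zero_of_right _
        (sum_mul_sub_weightedMean _ _ (pAG1B1G2_pos hpos a g₁ b₁ g₂).ne')

theorem condExpG2_eq_zero_of_sum_pG1B1_mul_eq_zero [Nonempty Y] [Nonempty A] [Nonempty G₁]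
    (hpos : ∀ o, 0 < p o) (hCI : CI_G1_AG2_B1 p) (g₂ : G₂) (D : G₁ → B₁ → ℝ)
    (hD : ∀ b₁, ∑ g₁, pG1B1 p g₁ b₁ * D g₁ b₁ = 0) :
    condExpG2 p g₂ (fun _ _ g₁ b₁ => D g₁ b₁) = 0 := by
  have : Nonempty G₂ := ⟨g₂⟩
  have hslice : ∀ b₁, ∑ g₁, (∑ y : Y, ∑ a', p (y, a', g₁, b₁, g₂)) * D g₁ b₁ = 0 := by
    intro b₁
    refine (mul_eq_zero_iff_right (pB1_pos hpos b₁).ne').1 ?_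
    calc (∑ g₁, (∑ y : Y, ∑ a', p (y, a', g₁, b₁, g₂)) * D g₁ b₁) * pB1 p b₁
        = (∑ a', pAB1G2 p a' b₁ g₂) * ∑ g₁, pG1B1 p g₁ b₁ * D g₁ b₁ := by
          rw [Finset.sum_mul, Finset.mul_sum]
          refine Finset.sum_congr rfl fun g₁ _ => ?_
          rw [mul_right_comm, sum_sum_mul_pB1 hpos hCI]
          ring
      _ = 0 := by rw [hD, mul_zero]
  calc condExpG2 p g₂ (fun _ _ g₁ b₁ => D g₁ b₁)
      = ∑ b₁, (∑ g₁, (∑ y : Y, ∑ a', p (y, a', g₁, b₁, g₂)) * D g₁ b₁) / pG2 p g₂ := by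
        simp only [condExpG2, Finset.sum_div, Finset.sum_mul, div_mul_eq_mul_div]
        exact Finset.sum_comm_cycle.trans <|
          (Finset.sum_congr rfl fun _ _ => Finset.sum_comm_cycle).trans Finset.sum_comm
    _ = 0 := Finset.sum_eq_zero fun b₁ _ => by rw [hslice, zero_div]

theorem condExpG2_sum_pG2_mul_mB_sub_mGB [Nonempty Y] [Nonempty G₁] (hpos : ∀ o, 0 < p o)
    (hCI : CI_G1_AG2_B1 p) (g₂ : G₂) (a : A) :
    condExpG2 p g₂ (fun _ _ g₁ b₁ => ∑ g₂', pG2 p g₂' * (mB p a b₁ g₂' - mGB p a g₁ b₁ g₂')) =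
      0 := by
  have : Nonempty A := ⟨a⟩
  refine condExpG2_eq_zero_of_sum_pG1B1_mul_eq_zero hpos hCI g₂ _ fun b₁ => ?_
  calc ∑ g₁, pG1B1 p g₁ b₁ * ∑ g₂', pG2 p g₂' * (mB p a b₁ g₂' - mGB p a g₁ b₁ g₂')
      = ∑ g₂', pG2 p g₂' * ((∑ g₁, pG1B1 p g₁ b₁) * mB p a b₁ g₂' -
          ∑ g₁, pG1B1 p g₁ b₁ * mGB p a g₁ b₁ g₂') := by
        simp only [Finset.mul_sum, Finset.sum_mul, ← Finset.sum_sub_distrib]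
        rw [Finset.sum_comm]
        exact Finset.sum_congr rfl fun _ _ => Finset.sum_congr rfl fun _ _ => by ring
    _ = 0 := by
        simp only [sum_pG1B1, pB1_mul_mB hpos hCI, sub_self, mul_zero, Finset.sum_const_zero]

end

theorem psi_difference_condExp_G2_general
    (p : Y × A × G₁ × B₁ × G₂ → ℝ)
    (hpos : ∀ o, 0 < p o) (a : A)
    (hCI : CI_G1_AG2_B1 p) :
    ∀ g₂ : G₂,
      ∑ y : Y, ∑ a' : A, ∑ g₁ : G₁, ∑ b₁ : B₁,
        (p (y, a', g₁, b₁, g₂) / pG2 p g₂) *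
          (psiB p a y a' b₁ g₂ - psiGB p a y a' g₁ b₁ g₂) = 0 := by
  intro g₂
  rcases isEmpty_or_nonempty Y with _ | _
  · simp
  rcases isEmpty_or_nonempty G₁ with _ | _
  · simp
  show condExpG2 p g₂ (fun y a' g₁ b₁ => psiB p a y a' b₁ g₂ - psiGB p a y a' g₁ b₁ g₂) = 0
  simp only [psiB_sub_psiGB hpos hCI]
  rw [condExpG2_add, condExpG2_sub, condExpG2_ite_mul_residual_mB hpos,
    condExpG2_ite_mul_residual_mGB hpos, condExpG2_sum_pG2_mul_mB_sub_mGB hpos hCI, sub_self,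
    add_zero]

/-- Second orthogonality condition in the proof of Lemma 4.3: given
`G₁ ⊥ (A, G₂) | B₁`, the difference of the two influence functions has
vanishing conditional expectation given `G₂`. -/
theorem psi_difference_condExp_G2
    (p : Y × A × G₁ × B₁ × G₂ → ℝ)
    (hpos : ∀ o, 0 < p o) (hsum : ∑ o, p o = 1) (a : A)
    (hCI : CI_G1_AG2_B1 p) :
    ∀ g₂ : G₂,
      ∑ y : Y, ∑ a' : A, ∑ g₁ : G₁, ∑ b₁ : B₁,
        (p (y, a', g₁, b₁, g₂) / pG2 p g₂) *
          (psiB p a y a' b₁ g₂ - psiGB p a y a' g₁ b₁ g₂) = 0 :=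
  psi_difference_condExp_G2_general p hpos a hCI

end
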